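/- (Algebraic form of the skein relation for Milnor invariants, negative crossing.) Let i_1, …, i_r ∈ {1, …, n} be pairwise distinct indices, let 1 ≤ k ≤ r, and let u, v, w ∈ F be group elements. Then δ_{i_1}…δ_{i_r}(v w)(1) − δ_{i_1}…δ_{i_r}(v · u⁻¹ x_{i_k}⁻¹ u · w)(1) = δ_{i_1}…δ_{i_{k-1}}(v u⁻¹)(1) · δ_{i_{k+1}}…δ_{i_r}(u w)(1), where an empty composite of Fox derivatives applied to a group element and evaluated at 1 is understood to be 1. (Topologically: this is the case of the skein relation where the positive-crossing resolution l₊ = vw overpasses the i_k-th strand and l₋ = v u⁻¹ x_{i_k}⁻¹ u w underpasses it.) -/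

import Mathlib

open MonoidAlgebra

/-- `FG n` is the free group on `n` generators `x_1, …, x_n`. -/
abbrev FG (n : ℕ) : Type := FreeGroup (Fin n)

/-- `GR n` is the integral group ring `ℤF` of the free group on `n` generators. -/
abbrev GR (n : ℕ) : Type := MonoidAlgebra ℤ (FG n)

/-- Iterated application of Fox derivatives along a list of indices:
`foxIter δ [i₁, …, iᵣ] x = δ i₁ (δ i₂ (⋯ (δ iᵣ x)))`; the empty list gives `x` itself. -/
noncomputable def foxIter {n : ℕ} (δ : Fin n → (GR n →ₗ[ℤ] GR n)) : List (Fin n) → GR n → GR n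
  | [], x => x
  | i :: l, x => δ i (foxIter δ l x)

/-!
Write `A = v u⁻¹ x_i⁻¹` and `B = u w`, so that `v w - v u⁻¹ x_i⁻¹ u w = A (x_i - 1) B` in `ℤF`.
The factor `γ = A (x_i - 1)` has augmentation `0`, is killed by `δ_j` for `j ≠ i`, and `δ_i γ = A`.
By the Leibniz rule `δ_j (α β) = ε(β) δ_j α + α δ_j β`, `γ` passes through the derivatives indexed
by `b`; `δ_i` then produces `ε(δ_b B) A` plus a left multiple of `γ`, which `δ_a` and `ε` kill.
What remains is `ε(δ_a A) ε(δ_b B)`, and `ε(δ_a A) = ε(δ_a (v u⁻¹))` because `i ∉ a`, so `δ_a`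
does not see the trailing `x_i⁻¹`.
-/

section FoxDerivative

variable {G : Type*} [Monoid G]

def IsFoxDerivative (D : MonoidAlgebra ℤ G →ₗ[ℤ] MonoidAlgebra ℤ G) : Prop :=
  ∀ g h : G, D (of ℤ G (g * h)) = D (of ℤ G g) + of ℤ G g * D (of ℤ G h)

namespace IsFoxDerivative

variable {D : MonoidAlgebra ℤ G →ₗ[ℤ] MonoidAlgebra ℤ G} (hD : IsFoxDerivative D)
include hD

theorem map_one_eq_zero : D 1 = 0 := by
  simpa [← MonoidAlgebra.one_def] using hD 1 1

theorem leibniz {ε : MonoidAlgebra ℤ G →+* ℤ} (hε : ∀ g, ε (of ℤ G g) = 1)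
    (α β : MonoidAlgebra ℤ G) : D (α * β) = ε β • D α + α * D β := by
  induction α using MonoidAlgebra.induction_on with
  | of g =>
    induction β using MonoidAlgebra.induction_on with
    | of h => rw [← MonoidHom.map_mul, hD, hε, one_smul]
    | add β₁ β₂ h₁ h₂ =>
      rw [mul_add, map_add, h₁, h₂, map_add, map_add, mul_add, add_smul]
      abel
    | smul r β h =>
      rw [mul_smul_comm, map_smul, h, smul_add, smul_smul, map_zsmul, smul_eq_mul, map_smul,
        mul_smul_comm]
  | add α₁ α₂ h₁ h₂ =>
    rw [add_mul, map_add, h₁, h₂, map_add, add_mul, smul_add]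
    abel
  | smul r α h =>
    rw [smul_mul_assoc, map_smul, h, map_smul, smul_add, smul_comm r (ε β), smul_mul_assoc]

theorem leibniz_mul_sub_one {ε : MonoidAlgebra ℤ G →+* ℤ} (hε : ∀ g, ε (of ℤ G g) = 1)
    (α : MonoidAlgebra ℤ G) (g : G) : D (α * (of ℤ G g - 1)) = α * D (of ℤ G g) := by
  rw [hD.leibniz hε, map_sub, hε, _root_.map_one ε, sub_self, zero_smul, zero_add, map_sub,
    hD.map_one_eq_zero, sub_zero]

end IsFoxDerivative

end FoxDerivative

theorem IsFoxDerivative.map_of_inv {G : Type*} [Group G]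
    {D : MonoidAlgebra ℤ G →ₗ[ℤ] MonoidAlgebra ℤ G} (hD : IsFoxDerivative D) (g : G) :
    D (of ℤ G g⁻¹) = -(of ℤ G g⁻¹ * D (of ℤ G g)) := by
  rw [eq_neg_iff_add_eq_zero, ← hD, inv_mul_cancel, _root_.map_one (of ℤ G), hD.map_one_eq_zero]

section FoxIter

variable {n : ℕ} (δ : Fin n → (GR n →ₗ[ℤ] GR n))

theorem foxIter_append (c₁ c₂ : List (Fin n)) (x : GR n) :
    foxIter δ (c₁ ++ c₂) x = foxIter δ c₁ (foxIter δ c₂ x) := by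
  induction c₁ with
  | nil => rfl
  | cons j c ih => simp [foxIter, ih]

theorem foxIter_add (c : List (Fin n)) (x y : GR n) :
    foxIter δ c (x + y) = foxIter δ c x + foxIter δ c y := by
  induction c with
  | nil => rfl
  | cons j c ih => simp [foxIter, ih]

theorem foxIter_sub (c : List (Fin n)) (x y : GR n) :
    foxIter δ c (x - y) = foxIter δ c x - foxIter δ c y := by
  induction c with
  | nil => rfl
  | cons j c ih => simp [foxIter, ih]

theorem foxIter_zsmul (c : List (Fin n)) (m : ℤ) (x : GR n) :
    foxIter δ c (m • x) = m • foxIter δ c x := by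
  induction c with
  | nil => rfl
  | cons j c ih => rw [foxIter, foxIter, ih, map_zsmul]

variable {δ} (hδ : ∀ j, IsFoxDerivative (δ j)) {ε : GR n →+* ℤ} (hε : ∀ g, ε (of ℤ (FG n) g) = 1)
include hδ hε

theorem foxIter_mul_of_forall_left_eq_zero {c : List (Fin n)} {α : GR n}
    (hα : ∀ j ∈ c, δ j α = 0) (β : GR n) : foxIter δ c (α * β) = α * foxIter δ c β := by
  induction c with
  | nil => rfl
  | cons j c ih =>
    rw [foxIter, ih fun k hk => hα k (List.mem_cons_of_mem _ hk), (hδ j).leibniz hε,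
      hα j List.mem_cons_self, smul_zero, zero_add, foxIter]

theorem foxIter_cons_mul_of_forall_right_eq_zero {j : Fin n} {c : List (Fin n)} {β : GR n}
    (hβ : ∀ k ∈ j :: c, δ k β = 0) (α : GR n) :
    foxIter δ (j :: c) (α * β) = ε β • foxIter δ (j :: c) α := by
  induction c generalizing j with
  | nil =>
    rw [foxIter, foxIter, (hδ j).leibniz hε, hβ j List.mem_cons_self, mul_zero, add_zero]
    rfl
  | cons k c ih =>
    rw [foxIter, ih fun l hl => hβ l (List.mem_cons_of_mem _ hl), map_zsmul]
    rfl

theorem augmentation_foxIter_mul_of_forall_right_eq_zero {c : List (Fin n)} {β : GR n}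
    (hβ : ∀ j ∈ c, δ j β = 0) (α : GR n) :
    ε (foxIter δ c (α * β)) = ε (foxIter δ c α) * ε β := by
  cases c with
  | nil => exact map_mul ε α β
  | cons j c =>
    rw [foxIter_cons_mul_of_forall_right_eq_zero hδ hε hβ, map_zsmul, smul_eq_mul, mul_comm]

theorem augmentation_foxIter_append_cons_mul {a b : List (Fin n)} {i : Fin n} {γ α : GR n}
    (hγ : ε γ = 0) (hγa : ∀ j ∈ a, δ j γ = 0) (hγb : ∀ j ∈ b, δ j γ = 0) (hγi : δ i γ = α)
    (β : GR n) :
    ε (foxIter δ (a ++ i :: b) (γ * β)) = ε (foxIter δ a α) * ε (foxIter δ b β) := by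
  rw [foxIter_append, foxIter, foxIter_mul_of_forall_left_eq_zero hδ hε hγb, (hδ i).leibniz hε,
    hγi, foxIter_add, foxIter_zsmul, foxIter_mul_of_forall_left_eq_zero hδ hε hγa, map_add,
    map_mul, hγ, zero_mul, add_zero, map_zsmul, smul_eq_mul, mul_comm]

end FoxIter

/-- Algebraic form of the skein relation for Milnor invariants, negative crossing:
`δ_{i₁}…δ_{iᵣ}(vw)(1) - δ_{i₁}…δ_{iᵣ}(v u⁻¹ x_{iₖ}⁻¹ u w)(1)
  = δ_{i₁}…δ_{iₖ₋₁}(v u⁻¹)(1) · δ_{iₖ₊₁}…δ_{iᵣ}(u w)(1)`. -/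
theorem milnor_skein_relation_negative (n : ℕ)
    (δ : Fin n → (GR n →ₗ[ℤ] GR n))
    (hδ₁ : ∀ i : Fin n, δ i (of ℤ (FG n) (FreeGroup.of i)) = 1)
    (hδ₂ : ∀ i j : Fin n, j ≠ i → δ i (of ℤ (FG n) (FreeGroup.of j)) = 0)
    (hδ₃ : ∀ (i : Fin n) (u v : FG n),
      δ i (of ℤ (FG n) (u * v)) =
        δ i (of ℤ (FG n) u) + of ℤ (FG n) u * δ i (of ℤ (FG n) v))
    (ε : GR n →+* ℤ)
    (hε : ∀ g : FG n, ε (of ℤ (FG n) g) = 1)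
    (a b : List (Fin n)) (i : Fin n) (hnd : (a ++ i :: b).Nodup) (u v w : FG n) :
    ε (foxIter δ (a ++ i :: b) (of ℤ (FG n) (v * w))) -
      ε (foxIter δ (a ++ i :: b)
        (of ℤ (FG n) (v * (u⁻¹ * (FreeGroup.of i)⁻¹ * u) * w))) =
        ε (foxIter δ a (of ℤ (FG n) (v * u⁻¹))) *
          ε (foxIter δ b (of ℤ (FG n) (u * w))) := by
  have hδ : ∀ j, IsFoxDerivative (δ j) := hδ₃
  obtain ⟨hia, hib⟩ : i ∉ a ∧ i ∉ b := by
    simpa [not_or] using (List.nodup_cons.mp (List.nodup_middle.mp hnd)).1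
  set x : FG n := FreeGroup.of i
  have hx : ∀ j ≠ i, δ j (of ℤ (FG n) x) = 0 := fun j hj => hδ₂ j i hj.symm
  have hx_inv : ∀ j ≠ i, δ j (of ℤ (FG n) x⁻¹) = 0 := fun j hj => by
    rw [(hδ j).map_of_inv, hx j hj, mul_zero, neg_zero]
  have hsplit : of ℤ (FG n) (v * w) - of ℤ (FG n) (v * (u⁻¹ * x⁻¹ * u) * w) =
      of ℤ (FG n) (v * u⁻¹ * x⁻¹) * (of ℤ (FG n) x - 1) * of ℤ (FG n) (u * w) := by
    rw [mul_sub, mul_one, sub_mul, ← map_mul, ← map_mul, ← map_mul]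
    congr 2 <;> group
  have hγ (j : Fin n) : δ j (of ℤ (FG n) (v * u⁻¹ * x⁻¹) * (of ℤ (FG n) x - 1)) =
      of ℤ (FG n) (v * u⁻¹ * x⁻¹) * δ j (of ℤ (FG n) x) :=
    (hδ j).leibniz_mul_sub_one hε _ _
  have hγ_eq_zero (j : Fin n) (hj : j ≠ i) :
      δ j (of ℤ (FG n) (v * u⁻¹ * x⁻¹) * (of ℤ (FG n) x - 1)) = 0 := by
    rw [hγ, hx j hj, mul_zero]
  rw [← map_sub, ← foxIter_sub, hsplit,
    augmentation_foxIter_append_cons_mul hδ hε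
      (by rw [map_mul, map_sub, hε, hε, map_one, sub_self, mul_zero])
      (fun j hj => hγ_eq_zero j (ne_of_mem_of_not_mem hj hia))
      (fun j hj => hγ_eq_zero j (ne_of_mem_of_not_mem hj hib)) (by rw [hγ, hδ₁, mul_one]),
    map_mul (of ℤ (FG n)) _ x⁻¹,
    augmentation_foxIter_mul_of_forall_right_eq_zero hδ hε
      (fun j hj => hx_inv j (ne_of_mem_of_not_mem hj hia)), hε, mul_one]
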